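/- arXiv:1511.02053 — 2 statements merged into one kernel-verified Lean document; each statement's English description precedes it below -/
import Mathlib

section
/- Let E, H : ℝ³ → ℝ³ with E(x) × H(x) ≠ 0 at a point x. Define F₁ = E - u×H + i(H + u×E) and F₂ = E + u×H + i(H - u×E) where u = (E×H)/|E×H|. Then F₁ + F₂ = 2(E + iH), and both F₁ and F₂ are null at x: Re(F₁)·Im(F₁) = 0, |Re(F₁)| = |Im(F₁)|, and similarly for F₂. -/
open Matrix

/-- Splitting into two null fields: with `u = (E×H)/|E×H|`, the fields
`F₁ = E - u×H + i(H + u×E)` and `F₂ = E + u×H + i(H - u×E)` satisfy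
`F₁ + F₂ = 2(E + iH)` and both are null: real and imaginary parts are orthogonal
and of equal magnitude. -/
theorem null_splitting (E H : Fin 3 → ℝ) (hEH : crossProduct E H ≠ 0) :
    ∀ u : Fin 3 → ℝ, u = (Real.sqrt (∑ i, (crossProduct E H i)^2))⁻¹ • crossProduct E H →
    ∀ F₁ F₂ : Fin 3 → ℂ,
      F₁ = (fun k => ((E k - crossProduct u H k : ℝ) : ℂ) +
              ((H k + crossProduct u E k : ℝ) : ℂ) * Complex.I) →
      F₂ = (fun k => ((E k + crossProduct u H k : ℝ) : ℂ) +
              ((H k - crossProduct u E k : ℝ) : ℂ) * Complex.I) →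
      (∀ k, F₁ k + F₂ k = 2 * (((E k : ℝ) : ℂ) + ((H k : ℝ) : ℂ) * Complex.I)) ∧
      (∑ k, (F₁ k).re * (F₁ k).im) = 0 ∧
      Real.sqrt (∑ k, (F₁ k).re ^ 2) = Real.sqrt (∑ k, (F₁ k).im ^ 2) ∧
      (∑ k, (F₂ k).re * (F₂ k).im) = 0 ∧
      Real.sqrt (∑ k, (F₂ k).re ^ 2) = Real.sqrt (∑ k, (F₂ k).im ^ 2) := by
  intro u hu F₁ F₂ h1 h2
  have hQpos : 0 < ∑ i, (crossProduct E H i)^2 := by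
    rcases (Function.ne_iff).1 hEH with ⟨j, hj⟩
    have hj2 : (crossProduct E) H j ≠ 0 := by simpa using hj
    have h0 : 0 < ((crossProduct E) H j)^2 := by positivity
    exact lt_of_lt_of_le h0 (Finset.single_le_sum (fun i _ => sq_nonneg ((crossProduct E) H i)) (Finset.mem_univ j))
  set s := Real.sqrt (∑ i, (crossProduct E H i)^2) with hs
  have hs0 : s ≠ 0 := ne_of_gt (Real.sqrt_pos.2 hQpos)
  have hsq : s^2 = ∑ i, (crossProduct E H i)^2 := Real.sq_sqrt hQpos.le
  have ht : (s⁻¹)^2 * ((E 1 * H 2 - E 2 * H 1)^2 + (E 2 * H 0 - E 0 * H 2)^2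
      + (E 0 * H 1 - E 1 * H 0)^2) = 1 := by
    have h2 : s^2 = (E 1 * H 2 - E 2 * H 1)^2
        + (E 2 * H 0 - E 0 * H 2)^2 + (E 0 * H 1 - E 1 * H 0)^2 := by
      rw [hsq]; simp [cross_apply, Fin.sum_univ_three]; try ring
    rw [← h2, inv_pow]
    exact inv_mul_cancel₀ (pow_ne_zero 2 hs0)
  subst h1 h2 hu
  refine ⟨?_, ?_, ?_, ?_, ?_⟩
  · intro k
    push_cast
    ring
  · simp only [cross_apply, Pi.smul_apply, smul_eq_mul, Fin.sum_univ_three,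
      Complex.add_re, Complex.add_im, Complex.ofReal_re, Complex.ofReal_im,
      Complex.mul_re, Complex.mul_im, Complex.I_re, Complex.I_im,
      Matrix.cons_val_zero, Matrix.cons_val_one, Matrix.head_cons, Matrix.cons_val_two, Matrix.tail_cons]
    linear_combination (-(E 0 * H 0 + E 1 * H 1 + E 2 * H 2)) * ht
  · refine congrArg Real.sqrt ?_
    simp only [cross_apply, Pi.smul_apply, smul_eq_mul, Fin.sum_univ_three,
      Complex.add_re, Complex.add_im, Complex.ofReal_re, Complex.ofReal_im,
      Complex.mul_re, Complex.mul_im, Complex.I_re, Complex.I_im,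
      Matrix.cons_val_zero, Matrix.cons_val_one, Matrix.head_cons, Matrix.cons_val_two, Matrix.tail_cons]
    linear_combination ((H 0^2+H 1^2+H 2^2)-(E 0^2+E 1^2+E 2^2)) * ht
  · simp only [cross_apply, Pi.smul_apply, smul_eq_mul, Fin.sum_univ_three,
      Complex.add_re, Complex.add_im, Complex.ofReal_re, Complex.ofReal_im,
      Complex.mul_re, Complex.mul_im, Complex.I_re, Complex.I_im,
      Matrix.cons_val_zero, Matrix.cons_val_one, Matrix.head_cons, Matrix.cons_val_two, Matrix.tail_cons]
    linear_combination (-(E 0 * H 0 + E 1 * H 1 + E 2 * H 2)) * ht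
  · refine congrArg Real.sqrt ?_
    simp only [cross_apply, Pi.smul_apply, smul_eq_mul, Fin.sum_univ_three,
      Complex.add_re, Complex.add_im, Complex.ofReal_re, Complex.ofReal_im,
      Complex.mul_re, Complex.mul_im, Complex.I_re, Complex.I_im,
      Matrix.cons_val_zero, Matrix.cons_val_one, Matrix.head_cons, Matrix.cons_val_two, Matrix.tail_cons]
    linear_combination ((H 0^2+H 1^2+H 2^2)-(E 0^2+E 1^2+E 2^2)) * ht
end

section
/- If each component of a complex vector field F : ℝ × ℝ³ → ℂ³ solving ∂F/∂t = i·curl F is C², then each real component of Re F and Im F satisfies the wave equation ∂²u/∂t² = Δu. -/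
/-!
Differentiating `∂ₜF = i curl F` once more in time and commuting mixed partials gives
`∂ₜ²F = i curl ∂ₜF = i² curl curl F = Δ F - grad div F = Δ F`.
The computation is carried out on the second Fréchet derivative of `(t, x) ↦ F t x`, which is
symmetric because `F` is `C²`; the wave equation for `Re F` and `Im F` then follows by applying
the real-linear functionals `v ↦ (v i).re` and `v ↦ (v i).im`.
-/

/-- Partial derivative in direction `i` of a real scalar field on `ℝ³`. -/
noncomputable def pd (i : Fin 3) (f : (Fin 3 → ℝ) → ℝ) (x : Fin 3 → ℝ) : ℝ :=
  deriv (fun s => f (Function.update x i s)) (x i)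

/-- Partial derivative in direction `i` of a complex scalar field on `ℝ³`. -/
noncomputable def cpd (i : Fin 3) (f : (Fin 3 → ℝ) → ℂ) (x : Fin 3 → ℝ) : ℂ :=
  deriv (fun s => f (Function.update x i s)) (x i)

/-- The curl of a complex vector field on `ℝ³` (componentwise on real/imaginary parts). -/
noncomputable def ccurl3 (V : (Fin 3 → ℝ) → Fin 3 → ℂ) (x : Fin 3 → ℝ) : Fin 3 → ℂ :=
  ![cpd 1 (fun y => V y 2) x - cpd 2 (fun y => V y 1) x,
    cpd 2 (fun y => V y 0) x - cpd 0 (fun y => V y 2) x,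
    cpd 0 (fun y => V y 1) x - cpd 1 (fun y => V y 0) x]

/-- The divergence of a complex vector field on `ℝ³`. -/
noncomputable def cdiv3 (V : (Fin 3 → ℝ) → Fin 3 → ℂ) (x : Fin 3 → ℝ) : ℂ :=
  ∑ i, cpd i (fun y => V y i) x

open Complex ContinuousLinearMap

noncomputable section

section Calculus

variable {E W V : Type*} [NormedAddCommGroup E] [NormedSpace ℝ E] [NormedAddCommGroup W]
  [NormedSpace ℝ W] [NormedAddCommGroup V] [NormedSpace ℝ V]

theorem map_fderiv_fderiv_eq {G : E → W} {p : E} (hG : DifferentiableAt ℝ (fderiv ℝ G) p)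
    (A A' : (E →L[ℝ] W) →L[ℝ] V) (h : ∀ q, A (fderiv ℝ G q) = A' (fderiv ℝ G q)) (w : E) :
    A (fderiv ℝ (fderiv ℝ G) p w) = A' (fderiv ℝ (fderiv ℝ G) p w) := by
  have hA := A.hasFDerivAt.comp p hG.hasFDerivAt
  rw [show A ∘ fderiv ℝ G = A' ∘ fderiv ℝ G from funext h] at hA
  exact congr($(hA.unique (A'.hasFDerivAt.comp p hG.hasFDerivAt)) w)

theorem ContDiff.differentiable_fderiv {G : E → W} (hG : ContDiff ℝ 2 G) :
    Differentiable ℝ (fderiv ℝ G) :=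
  (hG.fderiv_right (m := 1) le_rfl).differentiable one_ne_zero

theorem ContDiff.hasFDerivAt_fderiv_apply {G : E → W} (hG : ContDiff ℝ 2 G) (v p : E) :
    HasFDerivAt (fun q => fderiv ℝ G q v) ((fderiv ℝ (fderiv ℝ G) p).flip v) p := by
  simpa using (hG.differentiable_fderiv p).hasFDerivAt.clm_apply (hasFDerivAt_const v p)

theorem ContDiff.fderiv_fderiv_apply {G : E → W} (hG : ContDiff ℝ 2 G) (p v w : E) :
    fderiv ℝ (fun q => fderiv ℝ G q v) p w = fderiv ℝ (fderiv ℝ G) p w v := by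
  rw [(hG.hasFDerivAt_fderiv_apply v p).fderiv, flip_apply]

theorem DifferentiableAt.deriv_clm_comp_slice_fst {f : ℝ × E → W} {t : ℝ} {x : E}
    (hf : DifferentiableAt ℝ f (t, x)) (Λ : W →L[ℝ] V) :
    deriv (fun s => Λ (f (s, x))) t = Λ (fderiv ℝ f (t, x) (1, 0)) :=
  (Λ.hasFDerivAt.comp_hasDerivAt t
    (hf.hasFDerivAt.comp_hasDerivAt t ((hasDerivAt_id t).prodMk (hasDerivAt_const t x)))).deriv

theorem DifferentiableAt.deriv_clm_comp_slice_update {ι : Type*} [Fintype ι] [DecidableEq ι]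
    {f : E × (ι → ℝ) → W} {t : E} {x : ι → ℝ} (hf : DifferentiableAt ℝ f (t, x))
    (Λ : W →L[ℝ] V) (j : ι) :
    deriv (fun s => Λ (f (t, Function.update x j s))) (x j) =
      Λ (fderiv ℝ f (t, x) (0, Pi.single j 1)) := by
  have hf' : HasFDerivAt f (fderiv ℝ f (t, x)) (t, Function.update x j (x j)) := by
    rw [Function.update_eq_self]
    exact hf.hasFDerivAt
  exact (Λ.hasFDerivAt.comp_hasDerivAt (x j) (hf'.comp_hasDerivAt (x j)
    ((hasDerivAt_const (x j) t).prodMk (hasDerivAt_update x j (x j))))).deriv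

theorem ContDiff.deriv_deriv_clm_comp_slice_fst {G : ℝ × E → W} (hG : ContDiff ℝ 2 G)
    (Λ : W →L[ℝ] V) (t : ℝ) (x : E) :
    deriv (fun s => deriv (fun r => Λ (G (r, x))) s) t =
      Λ (fderiv ℝ (fderiv ℝ G) (t, x) (1, 0) (1, 0)) := by
  have hinner (s : ℝ) : deriv (fun r => Λ (G (r, x))) s = Λ (fderiv ℝ G (s, x) (1, 0)) :=
    (hG.differentiable two_ne_zero (s, x)).deriv_clm_comp_slice_fst Λ
  simp_rw [hinner]
  rw [(hG.hasFDerivAt_fderiv_apply _ (t, x)).differentiableAt.deriv_clm_comp_slice_fst Λ,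
    hG.fderiv_fderiv_apply]

theorem ContDiff.pd_pd_clm_comp {G : ℝ × (Fin 3 → ℝ) → W} (hG : ContDiff ℝ 2 G) (Λ : W →L[ℝ] ℝ)
    (t : ℝ) (x : Fin 3 → ℝ) (j : Fin 3) :
    pd j (fun y => pd j (fun z => Λ (G (t, z))) y) x =
      Λ (fderiv ℝ (fderiv ℝ G) (t, x) (0, Pi.single j 1) (0, Pi.single j 1)) := by
  have hinner (y : Fin 3 → ℝ) :
      pd j (fun z => Λ (G (t, z))) y = Λ (fderiv ℝ G (t, y) (0, Pi.single j 1)) :=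
    (hG.differentiable two_ne_zero (t, y)).deriv_clm_comp_slice_update Λ j
  simp_rw [hinner]
  rw [pd, (hG.hasFDerivAt_fderiv_apply _ (t, x)).differentiableAt.deriv_clm_comp_slice_update Λ j,
    hG.fderiv_fderiv_apply]

end Calculus

-- A matrix `J` stands for the Jacobian of a vector field `V` at a point: `J j k = ∂ⱼ Vₖ`.
def curlOfJacobian : (Fin 3 → Fin 3 → ℂ) →L[ℂ] Fin 3 → ℂ :=
  LinearMap.toContinuousLinearMap
    { toFun := fun J => ![J 1 2 - J 2 1, J 2 0 - J 0 2, J 0 1 - J 1 0]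
      map_add' := fun J K => by ext i; fin_cases i <;> simp <;> ring
      map_smul' := fun c J => by ext i; fin_cases i <;> simp [mul_sub] }

def divOfJacobian : (Fin 3 → Fin 3 → ℂ) →L[ℂ] ℂ :=
  LinearMap.toContinuousLinearMap
    { toFun := fun J => ∑ j, J j j
      map_add' := fun J K => by simp [Finset.sum_add_distrib]
      map_smul' := fun c J => by simp [Finset.mul_sum] }

lemma curlOfJacobian_apply (J : Fin 3 → Fin 3 → ℂ) :
    curlOfJacobian J = ![J 1 2 - J 2 1, J 2 0 - J 0 2, J 0 1 - J 1 0] := rfl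

lemma divOfJacobian_apply (J : Fin 3 → Fin 3 → ℂ) : divOfJacobian J = ∑ j, J j j := rfl

-- `H j k` stands for `∂ⱼ ∂ₖ V`.
theorem curl_curl_eq_grad_div_sub_laplacian (H : Fin 3 → Fin 3 → Fin 3 → ℂ)
    (hH : ∀ j k, H j k = H k j) :
    curlOfJacobian (fun j => curlOfJacobian (H j)) =
      (fun i => divOfJacobian (H i)) - ∑ j, H j j := by
  ext i
  fin_cases i <;>
  simp [curlOfJacobian_apply, divOfJacobian_apply, Fin.sum_univ_three, hH 1 0, hH 2 0, hH 2 1] <;>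
  ring

def spaceJacobian {W : Type*} [NormedAddCommGroup W] [NormedSpace ℝ W] :
    (ℝ × (Fin 3 → ℝ) →L[ℝ] W) →L[ℝ] Fin 3 → W :=
  ContinuousLinearMap.pi fun j => ContinuousLinearMap.apply ℝ W (0, Pi.single j 1)

@[simp]
lemma spaceJacobian_apply {W : Type*} [NormedAddCommGroup W] [NormedSpace ℝ W]
    (L : ℝ × (Fin 3 → ℝ) →L[ℝ] W) (j : Fin 3) : spaceJacobian L j = L (0, Pi.single j 1) :=
  rfl

section Maxwell

variable {G : ℝ × (Fin 3 → ℝ) → Fin 3 → ℂ}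

theorem fderiv_fderiv_time_time_eq_sum_of_maxwell (hG : ContDiff ℝ 2 G)
    (hcurl : ∀ q, fderiv ℝ G q (1, 0) = I • curlOfJacobian (spaceJacobian (fderiv ℝ G q)))
    (hdiv : ∀ q, divOfJacobian (spaceJacobian (fderiv ℝ G q)) = 0) (p : ℝ × (Fin 3 → ℝ)) :
    fderiv ℝ (fderiv ℝ G) p (1, 0) (1, 0) =
      ∑ j, fderiv ℝ (fderiv ℝ G) p (0, Pi.single j 1) (0, Pi.single j 1) := by
  set B := fderiv ℝ (fderiv ℝ G) p
  have hsymm : ∀ v w, B v w = B w v := hG.contDiffAt.isSymmSndFDerivAt (by simp)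
  have hcurl' (w) : B w (1, 0) = I • curlOfJacobian (spaceJacobian (B w)) := by
    simpa using map_fderiv_fderiv_eq (hG.differentiable_fderiv p) (apply ℝ _ (1, 0))
      (((I • curlOfJacobian).restrictScalars ℝ).comp spaceJacobian) (by simpa using hcurl) w
  have hdiv' (w) : divOfJacobian (spaceJacobian (B w)) = 0 := by
    simpa using map_fderiv_fderiv_eq (hG.differentiable_fderiv p)
      ((divOfJacobian.restrictScalars ℝ).comp spaceJacobian) 0 (by simpa using hdiv) w
  calc B (1, 0) (1, 0) = I • curlOfJacobian (spaceJacobian (B (1, 0))) := hcurl' _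
    _ = I • curlOfJacobian
          (I • fun j => curlOfJacobian (spaceJacobian (B (0, Pi.single j 1)))) := by
      congr 2
      ext j : 1
      simp [hsymm (1, 0), hcurl']
    _ = -curlOfJacobian (fun j => curlOfJacobian (spaceJacobian (B (0, Pi.single j 1)))) := by
      rw [map_smul, smul_smul, I_mul_I, neg_one_smul]
    _ = ∑ j, B (0, Pi.single j 1) (0, Pi.single j 1) := by
      rw [curl_curl_eq_grad_div_sub_laplacian _ fun j k => by ext; simp [hsymm],
        show (fun i => divOfJacobian _) = 0 from funext fun i => hdiv' _]
      simp

theorem ContDiff.wave_equation_clm_comp_of_maxwell (hG : ContDiff ℝ 2 G)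
    (hcurl : ∀ q, fderiv ℝ G q (1, 0) = I • curlOfJacobian (spaceJacobian (fderiv ℝ G q)))
    (hdiv : ∀ q, divOfJacobian (spaceJacobian (fderiv ℝ G q)) = 0)
    (Λ : (Fin 3 → ℂ) →L[ℝ] ℝ) (t : ℝ) (x : Fin 3 → ℝ) :
    deriv (fun s => deriv (fun r => Λ (G (r, x))) s) t =
      ∑ j, pd j (fun y => pd j (fun z => Λ (G (t, z))) y) x := by
  rw [hG.deriv_deriv_clm_comp_slice_fst, fderiv_fderiv_time_time_eq_sum_of_maxwell hG hcurl hdiv,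
    map_sum]
  exact Finset.sum_congr rfl fun j _ => (hG.pd_pd_clm_comp Λ t x j).symm

end Maxwell

section SpaceTime

variable {F : ℝ → (Fin 3 → ℝ) → Fin 3 → ℂ}

theorem fderiv_time_eq_I_smul_curlOfJacobian
    (hF : Differentiable ℝ (fun p : ℝ × (Fin 3 → ℝ) => F p.1 p.2))
    (heq : ∀ t x, deriv (fun s => F s x) t = fun i => I * ccurl3 (F t) x i)
    (q : ℝ × (Fin 3 → ℝ)) :
    fderiv ℝ (fun p : ℝ × (Fin 3 → ℝ) => F p.1 p.2) q (1, 0) =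
      I • curlOfJacobian (spaceJacobian (fderiv ℝ (fun p : ℝ × (Fin 3 → ℝ) => F p.1 p.2) q)) := by
  obtain ⟨t, x⟩ := q
  have htime : deriv (fun s => F s x) t = fderiv ℝ (fun p => F p.1 p.2) (t, x) (1, 0) :=
    (hF (t, x)).deriv_clm_comp_slice_fst (ContinuousLinearMap.id ℝ _)
  have hcpd (j k : Fin 3) :
      cpd j (fun y => F t y k) x = fderiv ℝ (fun p => F p.1 p.2) (t, x) (0, Pi.single j 1) k :=
    (hF (t, x)).deriv_clm_comp_slice_update (proj k) j
  rw [← htime, heq t x]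
  ext k
  fin_cases k <;> simp [ccurl3, curlOfJacobian_apply, hcpd]

theorem divOfJacobian_fderiv_eq_zero
    (hF : Differentiable ℝ (fun p : ℝ × (Fin 3 → ℝ) => F p.1 p.2))
    (hdivRe : ∀ t x, ∑ i, pd i (fun y => (F t y i).re) x = 0)
    (hdivIm : ∀ t x, ∑ i, pd i (fun y => (F t y i).im) x = 0) (q : ℝ × (Fin 3 → ℝ)) :
    divOfJacobian (spaceJacobian (fderiv ℝ (fun p : ℝ × (Fin 3 → ℝ) => F p.1 p.2) q)) = 0 := by
  obtain ⟨t, x⟩ := q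
  have hre (j : Fin 3) : pd j (fun y => (F t y j).re) x =
      (fderiv ℝ (fun p => F p.1 p.2) (t, x) (0, Pi.single j 1) j).re :=
    (hF (t, x)).deriv_clm_comp_slice_update (reCLM.comp (proj j)) j
  have him (j : Fin 3) : pd j (fun y => (F t y j).im) x =
      (fderiv ℝ (fun p => F p.1 p.2) (t, x) (0, Pi.single j 1) j).im :=
    (hF (t, x)).deriv_clm_comp_slice_update (imCLM.comp (proj j)) j
  apply Complex.ext
  · simpa [divOfJacobian_apply, re_sum, hre] using hdivRe t x
  · simpa [divOfJacobian_apply, im_sum, him] using hdivIm t x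

end SpaceTime

end

/-- If `F` is a `C²` solution of `∂F/∂t = i·curl F` with divergence-free real and
imaginary parts, then each real component of `Re F` and `Im F` satisfies the wave
equation `∂²u/∂t² = Δu`. -/
theorem components_satisfy_wave_equation
    (F : ℝ → (Fin 3 → ℝ) → Fin 3 → ℂ)
    (hF : ContDiff ℝ 2 (fun p : ℝ × (Fin 3 → ℝ) => F p.1 p.2))
    (heq : ∀ t x, deriv (fun s => F s x) t = fun i => Complex.I * ccurl3 (F t) x i)
    (hdivRe : ∀ t x, (∑ i, pd i (fun y => (F t y i).re) x) = 0)
    (hdivIm : ∀ t x, (∑ i, pd i (fun y => (F t y i).im) x) = 0) :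
    ∀ (i : Fin 3) (t : ℝ) (x : Fin 3 → ℝ),
      (deriv (fun s => deriv (fun r => (F r x i).re) s) t =
        ∑ j, pd j (fun y => pd j (fun z => (F t z i).re) y) x) ∧
      (deriv (fun s => deriv (fun r => (F r x i).im) s) t =
        ∑ j, pd j (fun y => pd j (fun z => (F t z i).im) y) x) := by
  intro i t x
  have hwave := hF.wave_equation_clm_comp_of_maxwell
    (fderiv_time_eq_I_smul_curlOfJacobian (hF.differentiable two_ne_zero) heq)
    (divOfJacobian_fderiv_eq_zero (hF.differentiable two_ne_zero) hdivRe hdivIm)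
  exact ⟨hwave (reCLM.comp (proj i)) t x, hwave (imCLM.comp (proj i)) t x⟩
end
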